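/- For each positive natural number k there exist a constraint set Σ_k and an instance I_k such that (a) both Σ_k and the subset of constraints of Σ_k that are not (I_k,Σ_k)-irrelevant are not inductively restricted, and (b) every chase sequence for I_k with Σ_k is (k-1)-cyclic but not k-cyclic. -/

import Mathlib

set_option maxHeartbeats 1000000

namespace StopChase

/-! ## Basic objects: values, terms, relation symbols, atoms, facts -/

/-- Database values: constants from `Δ` and labeled nulls from `Δ_null`. -/
inductive Val : Type
  | const : ℕ → Val
  | null : ℕ → Val
  deriving DecidableEq

/-- `v` is a labeled null. -/
def Val.isNull : Val → Prop
  | .null _ => True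
  | .const _ => False

/-- Terms: variables or constant parameters. -/
inductive Term : Type
  | var : ℕ → Term
  | const : ℕ → Term
  deriving DecidableEq

/-- Relation symbols of a universal schema: a name together with an arity. -/
abbrev RelSym : Type := ℕ × ℕ

/-- The arity of a relation symbol. -/
def RelSym.arity (R : RelSym) : ℕ := R.2

/-- A position `R^i` of a relation symbol. -/
abbrev Pos : Type := RelSym × ℕ

/-- An atom: a relation symbol applied to a list of terms. -/
structure Atom : Type where
  rel : RelSym
  args : List Term
  deriving DecidableEq

/-- Well-formedness of an atom: the number of arguments matches the arity. -/
def Atom.wf (A : Atom) : Prop := A.args.length = A.rel.arity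

/-- A fact: a relation symbol applied to a list of values. -/
structure Fact : Type where
  rel : RelSym
  args : List Val
  deriving DecidableEq

/-- Well-formedness of a fact. -/
def Fact.wf (F : Fact) : Prop := F.args.length = F.rel.arity

/-- The variables occurring in an atom. -/
def Atom.vars (A : Atom) : Set ℕ := {v | Term.var v ∈ A.args}

/-- The variables occurring in a list of atoms. -/
def varsOf (L : List Atom) : Set ℕ := {v | ∃ A ∈ L, v ∈ A.vars}

/-- Variable `v` occurs at position `π` in the list of atoms `L`. -/
def occursAt (L : List Atom) (v : ℕ) (π : Pos) : Prop :=
  ∃ A ∈ L, A.rel = π.1 ∧ A.args[π.2]? = some (Term.var v)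

/-- The set of positions of a list of atoms. -/
def posOfAtoms (L : List Atom) : Set Pos :=
  {π | ∃ A ∈ L, A.rel = π.1 ∧ π.2 < A.args.length}

/-! ## Constraints: TGDs and EGDs -/

/-- A tuple generating dependency `∀ x̄ (φ(x̄) → ∃ ȳ ψ(x̄,ȳ))`, given by its body `φ`
and head `ψ`.  The universally quantified variables are those occurring in the body;
head variables not occurring in the body are (implicitly) existentially quantified. -/
structure TGD : Type where
  body : List Atom
  head : List Atom
  deriving DecidableEq

/-- Well-formedness of a TGD: the head is nonempty and all atoms are well-formed. -/
def TGD.wf (t : TGD) : Prop :=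
  t.head ≠ [] ∧ (∀ A ∈ t.body, A.wf) ∧ (∀ A ∈ t.head, A.wf)

/-- The universally quantified variables of a TGD. -/
def TGD.uniVars (t : TGD) : Set ℕ := varsOf t.body

/-- The existentially quantified variables of a TGD. -/
def TGD.exVars (t : TGD) : Set ℕ := varsOf t.head \ varsOf t.body

/-- An equality generating dependency `∀ x̄ (φ(x̄) → x_i = x_j)`. -/
structure EGD : Type where
  body : List Atom
  lhs : ℕ
  rhs : ℕ
  deriving DecidableEq

/-- Well-formedness of an EGD: nonempty well-formed body and both equated
variables occur in the body. -/
def EGD.wf (e : EGD) : Prop :=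
  e.body ≠ [] ∧ (∀ A ∈ e.body, A.wf) ∧ e.lhs ∈ varsOf e.body ∧ e.rhs ∈ varsOf e.body

/-- A constraint is a TGD or an EGD. -/
inductive Constraint : Type
  | tgd : TGD → Constraint
  | egd : EGD → Constraint
  deriving DecidableEq

/-- Well-formedness of a constraint. -/
def Constraint.wf : Constraint → Prop
  | .tgd t => t.wf
  | .egd e => e.wf

/-- The body atoms of a constraint. -/
def Constraint.bodyAtoms : Constraint → List Atom
  | .tgd t => t.body
  | .egd e => e.body

/-- `pos(α)`: the set of positions occurring in the body of `α`. -/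
def Constraint.pos (α : Constraint) : Set Pos := posOfAtoms α.bodyAtoms

/-- `pos(Σ)`: the set of positions occurring in the bodies of constraints of `Σ`. -/
def posOf (S : Set Constraint) : Set Pos := ⋃ α ∈ S, α.pos

/-- The universally quantified variables occurring in the head of a constraint
(for an EGD, the two equated variables). -/
def Constraint.headUniVars : Constraint → Set ℕ
  | .tgd t => varsOf t.head ∩ varsOf t.body
  | .egd e => {e.lhs, e.rhs}

/-! ## Semantics -/

/-- Evaluation of a term under an assignment `ν : V → Δ ∪ Δ_null`. -/
def Term.eval (ν : ℕ → Val) : Term → Val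
  | .var v => ν v
  | .const c => Val.const c

/-- Instantiation of an atom to a fact. -/
def Atom.inst (ν : ℕ → Val) (A : Atom) : Fact := ⟨A.rel, A.args.map (Term.eval ν)⟩

/-- All atoms of `L`, instantiated by `ν`, hold in the instance `I`. -/
def bodyHolds (I : Set Fact) (L : List Atom) (ν : ℕ → Val) : Prop :=
  ∀ A ∈ L, A.inst ν ∈ I

/-- `I ⊨ α(ā)`: the constraint `α` holds in `I` under the assignment `ν` of its
universally quantified variables. -/
def Constraint.satAt : Constraint → Set Fact → (ℕ → Val) → Prop
  | .tgd t, I, ν => bodyHolds I t.body ν →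
      ∃ ν' : ℕ → Val, (∀ v ∈ varsOf t.body, ν' v = ν v) ∧ bodyHolds I t.head ν'
  | .egd e, I, ν => bodyHolds I e.body ν → ν e.lhs = ν e.rhs

/-- `I ⊨ α`. -/
def Constraint.holds (α : Constraint) (I : Set Fact) : Prop := ∀ ν, α.satAt I ν

/-- The active domain of an instance: the set of values occurring in it. -/
def adom (I : Set Fact) : Set Val := {v | ∃ F ∈ I, v ∈ F.args}

/-- Substitution of the value `a` by the value `b`. -/
def Val.subst (a b : Val) (v : Val) : Val := if v = a then b else v

/-- Substitution applied to a fact. -/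
def Fact.substF (a b : Val) (F : Fact) : Fact := ⟨F.rel, F.args.map (Val.subst a b)⟩

/-! ## Chase steps and chase sequences -/

/-- A chase step `I →_{α,ā} J`: the instance `I` violates `α(ā)` and `J` is
obtained from `I` by adding the head atoms instantiated with fresh labeled nulls
for the existentially quantified variables (TGDs), resp. by equating a labeled
null with another value (EGDs). -/
def Constraint.chaseStep (α : Constraint) (ν : ℕ → Val) (I J : Set Fact) : Prop :=
  ¬ α.satAt I ν ∧
  match α with
  | .tgd t =>
      ∃ ν' : ℕ → Val,
        (∀ v ∈ varsOf t.body, ν' v = ν v) ∧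
        (∀ v ∈ t.exVars, (ν' v).isNull ∧ ν' v ∉ adom I) ∧
        (∀ v ∈ t.exVars, ∀ w ∈ t.exVars, ν' v = ν' w → v = w) ∧
        J = I ∪ {F | ∃ A ∈ t.head, F = A.inst ν'}
  | .egd e =>
      ∃ a b : Val, a.isNull ∧ ({a, b} : Set Val) = {ν e.lhs, ν e.rhs} ∧
        J = Fact.substF a b '' I

/-- The data of a (finite or infinite) chase sequence: the instances, and
the constraint and assignment used at each step. -/
structure ChaseData : Type where
  inst : ℕ → Set Fact
  cns : ℕ → Constraint
  asg : ℕ → ℕ → Val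

/-- `D` is a chase sequence of length (at least) `r` with constraints from `S`. -/
def ChaseData.okUpTo (D : ChaseData) (S : Set Constraint) (r : ℕ) : Prop :=
  ∀ i < r, D.cns i ∈ S ∧ (D.cns i).chaseStep (D.asg i) (D.inst i) (D.inst (i+1))

/-- `D` is an infinite chase sequence with constraints from `S`. -/
def ChaseData.okAll (D : ChaseData) (S : Set Constraint) : Prop :=
  ∀ i, D.cns i ∈ S ∧ (D.cns i).chaseStep (D.asg i) (D.inst i) (D.inst (i+1))

/-- The nulls freshly introduced in the first `r` steps are globally fresh,
i.e. do not occur in any earlier instance of the sequence. -/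
def ChaseData.fresh (D : ChaseData) (r : ℕ) : Prop :=
  ∀ i < r, ∀ v, v.isNull → v ∈ adom (D.inst (i+1)) → v ∉ adom (D.inst i) →
    ∀ j ≤ i, v ∉ adom (D.inst j)

/-- Global freshness for an infinite sequence. -/
def ChaseData.freshAll (D : ChaseData) : Prop := ∀ r, D.fresh r

/-- The chase with `S` terminates on the instance `I`: there is no infinite
chase sequence starting from `I`. -/
def chaseTerminates (S : Set Constraint) (I : Set Fact) : Prop :=
  ¬ ∃ D : ChaseData, D.inst 0 = I ∧ D.okAll S

/-- `J` is a result of the chase of `I` with `S`: it is the final instance of a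
finite chase sequence starting from `I` and satisfies all constraints of `S`. -/
def ChaseResult (S : Set Constraint) (I J : Set Fact) : Prop :=
  ∃ (D : ChaseData) (r : ℕ), D.inst 0 = I ∧ D.okUpTo S r ∧ D.inst r = J ∧
    ∀ α ∈ S, α.holds J

/-- `α` is `(I,S)`-irrelevant: no chase sequence starting from `I` with `S`
contains a chase step applying `α`. -/
def Irrelevant (I : Set Fact) (S : Set Constraint) (α : Constraint) : Prop :=
  ¬ ∃ (D : ChaseData) (r : ℕ), D.inst 0 = I ∧ D.okUpTo S r ∧ ∃ i < r, D.cns i = α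

/-! ## Affected positions, propagation graph and safety -/

/-- The affected positions `aff(S)` of (the TGDs of) a constraint set `S`. -/
inductive Affected (S : Set Constraint) : Pos → Prop
  | ex (t : TGD) (y : ℕ) (π : Pos) :
      Constraint.tgd t ∈ S → y ∈ t.exVars → occursAt t.head y π → Affected S π
  | uni (t : TGD) (x : ℕ) (π : Pos) :
      Constraint.tgd t ∈ S → x ∈ t.uniVars → occursAt t.head x π →
      (∃ π', occursAt t.body x π') →
      (∀ π', occursAt t.body x π' → Affected S π') → Affected S π

/-- A (non-special) edge `π1 → π2` of the propagation graph `prop(S)`. -/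
def propEdge (S : Set Constraint) (π1 π2 : Pos) : Prop :=
  ∃ t, Constraint.tgd t ∈ S ∧ ∃ x ∈ t.uniVars, x ∈ varsOf t.head ∧
    occursAt t.body x π1 ∧ (∀ π, occursAt t.body x π → Affected S π) ∧
    occursAt t.head x π2

/-- A special edge `π1 →* π2` of the propagation graph `prop(S)`. -/
def propSpecialEdge (S : Set Constraint) (π1 π2 : Pos) : Prop :=
  ∃ t, Constraint.tgd t ∈ S ∧ ∃ x ∈ t.uniVars, x ∈ varsOf t.head ∧
    occursAt t.body x π1 ∧ (∀ π, occursAt t.body x π → Affected S π) ∧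
    ∃ y ∈ t.exVars, occursAt t.head y π2

/-- Any edge of the propagation graph. -/
def propAnyEdge (S : Set Constraint) (π1 π2 : Pos) : Prop :=
  propEdge S π1 π2 ∨ propSpecialEdge S π1 π2

/-- `S` is safe: the propagation graph `prop(S)` has no cycle going through a
special edge. -/
def IsSafe (S : Set Constraint) : Prop :=
  ¬ ∃ π1 π2, propSpecialEdge S π1 π2 ∧ Relation.ReflTransGen (propAnyEdge S) π2 π1

/-! ## Restriction systems -/

/-- The fact `F` has a labeled null at position `π`. -/
def Fact.nullAt (F : Fact) (π : Pos) : Prop :=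
  F.rel = π.1 ∧ ∃ v, F.args[π.2]? = some v ∧ v.isNull

/-- The instance `I` contains labeled nulls only in positions from `P`. -/
def nullsOnlyIn (I : Set Fact) (P : Set Pos) : Prop :=
  ∀ F ∈ I, ∀ π : Pos, F.nullAt π → π ∈ P

/-- `α ≺_P β`. -/
def prec (P : Set Pos) (α β : Constraint) : Prop :=
  ∃ (I J : Set Fact) (a b : ℕ → Val),
    I.Finite ∧ nullsOnlyIn I P ∧
    ¬ α.satAt I a ∧ β.satAt I b ∧
    α.chaseStep a I J ∧ ¬ β.satAt J b ∧
    ∃ v ∈ β.headUniVars, (b v).isNull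

/-- `aff-cl(t,P)` for a TGD `t` and a set of positions `P`. -/
def affCl (t : TGD) (P : Set Pos) : Set Pos :=
  {π | π ∈ posOfAtoms t.head ∧
    ((∀ x ∈ t.uniVars, occursAt t.head x π → ∀ π', occursAt t.body x π' → π' ∈ P) ∨
     (∃ y ∈ t.exVars, occursAt t.head y π))}

/-- A restriction system: a directed graph on constraints together with a
position-set labelling. -/
structure RestrSys : Type where
  E : Constraint → Constraint → Prop
  f : Constraint → Set Pos

/-- The defining closure conditions of a restriction system for `S`. -/
def RestrSys.valid (S : Set Constraint) (R : RestrSys) : Prop :=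
  (∀ t : TGD, ∀ β, Constraint.tgd t ∈ S → β ∈ S → R.E (.tgd t) β →
      affCl t (R.f (.tgd t)) ∩ β.pos ⊆ R.f β) ∧
  (∀ e : EGD, ∀ β, Constraint.egd e ∈ S → β ∈ S → R.E (.egd e) β →
      R.f (.egd e) ∩ β.pos ⊆ R.f β) ∧
  (∀ α β, α ∈ S → β ∈ S → prec (R.f α) α β → R.E α β)

/-- Pointwise inclusion of restriction systems. -/
def RestrSys.le (R1 R2 : RestrSys) : Prop :=
  (∀ a b, R1.E a b → R2.E a b) ∧ (∀ a, R1.f a ⊆ R2.f a)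

/-- The minimal restriction system of `S` (obtained from the empty system by
repeatedly enforcing the closure conditions, extending only as required). -/
def IsMinimalRS (S : Set Constraint) (R : RestrSys) : Prop :=
  R.valid S ∧ ∀ R', R'.valid S → R.le R'

/-- The edge relation of a restriction system, restricted to `S`. -/
def edgeOn (S : Set Constraint) (E : Constraint → Constraint → Prop)
    (a b : Constraint) : Prop :=
  a ∈ S ∧ b ∈ S ∧ E a b

/-- The strongly connected component of `α`. -/
def sccOf (S : Set Constraint) (E : Constraint → Constraint → Prop)
    (α : Constraint) : Set Constraint :=
  {β | β ∈ S ∧ Relation.ReflTransGen (edgeOn S E) α β ∧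
    Relation.ReflTransGen (edgeOn S E) β α}

/-- The (nontrivial) strongly connected components of the graph `(S,E)`,
i.e. those containing a cycle. -/
def SCCs (S : Set Constraint) (E : Constraint → Constraint → Prop) :
    Set (Set Constraint) :=
  {C | ∃ α ∈ S, Relation.TransGen (edgeOn S E) α α ∧ C = sccOf S E α}

/-- `PartMem S S'` holds iff `S' ∈ part(S)`, where `part` is the recursive
algorithm computing strongly connected components of minimal restriction
systems. -/
inductive PartMem : Set Constraint → Set Constraint → Prop
  | base (S : Set Constraint) (R : RestrSys) :
      IsMinimalRS S R → SCCs S R.E = {S} → PartMem S S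
  | step (S : Set Constraint) (R : RestrSys) (C S' : Set Constraint) :
      IsMinimalRS S R → SCCs S R.E ≠ {S} → C ∈ SCCs S R.E →
      PartMem C S' → PartMem S S'

/-- `S` is inductively restricted: every `S' ∈ part(S)` is safe. -/
def InductivelyRestricted (S : Set Constraint) : Prop :=
  ∀ S', PartMem S S' → IsSafe S'

/-- `S` is safely restricted: every strongly connected component of its
minimal restriction system is safe. -/
def SafelyRestricted (S : Set Constraint) : Prop :=
  ∀ R, IsMinimalRS S R → ∀ C ∈ SCCs S R.E, IsSafe C

/-! ## Monitor graphs -/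

/-- A node of a monitor graph: a value together with a set of positions. -/
abbrev MNode : Type := Val × Set Pos

/-- A labeled edge of a monitor graph. -/
structure MEdge : Type where
  src : MNode
  cns : Constraint
  lbl : Set Pos
  tgt : MNode

/-- The labeled nulls newly introduced by a chase step from `I` to `J`. -/
def newNulls (I J : Set Fact) : Set Val := {v | v.isNull ∧ v ∈ adom J ∧ v ∉ adom I}

/-- The set of positions at which the value `v` occurs in the instance `I`. -/
def posOfVal (I : Set Fact) (v : Val) : Set Pos :=
  {π | ∃ F ∈ I, F.rel = π.1 ∧ F.args[π.2]? = some v}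

/-- The set of positions of the instantiated body `body(α(ā))` in which the
value `v` occurs. -/
def instBodyPos (α : Constraint) (ν : ℕ → Val) (v : Val) : Set Pos :=
  {π | ∃ A ∈ α.bodyAtoms, A.rel = π.1 ∧ (A.args.map (Term.eval ν))[π.2]? = some v}

/-- The monitor-graph nodes created by the `i`-th chase step. -/
def ChaseData.mgNew (D : ChaseData) (i : ℕ) : Set MNode :=
  {p | ∃ n ∈ newNulls (D.inst i) (D.inst (i+1)), p = (n, posOfVal (D.inst (i+1)) n)}

/-- The nodes of the monitor graph of the length-`i` prefix of `D`. -/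
def ChaseData.mgV (D : ChaseData) : ℕ → Set MNode
  | 0 => ∅
  | i+1 => D.mgV i ∪ D.mgNew i

/-- The edges of the monitor graph of the length-`i` prefix of `D`. -/
def ChaseData.mgE (D : ChaseData) : ℕ → Set MEdge
  | 0 => ∅
  | i+1 => D.mgE i ∪
      {e | e.src ∈ D.mgV i ∧ e.tgt ∈ D.mgNew i ∧ e.cns = D.cns i ∧
           e.lbl = instBodyPos (D.cns i) (D.asg i) e.src.1}

/-- A path in a monitor graph: a list of edges of the graph in which consecutive
edges are chained (`p_{5,6}(e_i) = p_{1,2}(e_{i+1})`). -/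
def IsPath (E : Set MEdge) (l : List MEdge) : Prop :=
  (∀ e ∈ l, e ∈ E) ∧ l.Chain' (fun a b => a.tgt = b.src)

/-- The projection `p_{2,3,4,6}` of an edge. -/
def MEdge.sig (e : MEdge) : Set Pos × Constraint × Set Pos × Set Pos :=
  (e.src.2, e.cns, e.lbl, e.tgt.2)

/-- A monitor graph with edge set `E` is `k`-cyclic: some path contains `k`
pairwise distinct edges, in order, that agree on the projection `p_{2,3,4,6}`. -/
def kCyclic (E : Set MEdge) (k : ℕ) : Prop :=
  ∃ l es : List MEdge, IsPath E l ∧ es.Sublist l ∧ es.length = k ∧ es.Nodup ∧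
    es.Chain' (fun a b => a.sig = b.sig)

/-- `DepthLe E v d`: the depth of the node `v` in the monitor graph with edge
set `E` is at most `d` (depth `0` for nodes without predecessors, and `1` plus
the maximal depth of the predecessors otherwise). -/
inductive DepthLe (E : Set MEdge) : MNode → ℕ → Prop
  | intro (v : MNode) (d : ℕ) (f : MEdge → ℕ) :
      (∀ e ∈ E, e.tgt = v → f e < d) →
      (∀ e, e ∈ E → e.tgt = v → DepthLe E e.src (f e)) → DepthLe E v d

/-- The node `v` has depth exactly `d`. -/
def HasDepth (E : Set MEdge) (v : MNode) (d : ℕ) : Prop :=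
  DepthLe E v d ∧ ∀ d' < d, ¬ DepthLe E v d'

/-!
Take `Σ = {α₁, α₂}` with `α₁ : Q(x₀,x₁) ∧ M(x₀,x₂) → ∃ x₃, Q(x₂,x₃) ∧ M(x₃,x₃)` and
`α₂ : M(x₀,x₁) → M(g,x₁)`, and `I_k = {Q(c₀,c₀)} ∪ {M(cᵢ,cᵢ₊₁) | i < k}`; argument positions
are numbered from `0`.

In every chase sequence `α₁` fires exactly once at each `cⱼ`, `j < k`, in this order, creating
one null `nⱼ` with `Q(cⱼ₊₁,nⱼ), M(nⱼ,nⱼ)`, while `α₂` creates no null. So the monitor graph of a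
complete sequence has the nodes `(nⱼ, {(Q,1), (M,0), (M,1)})`, `j < k`, and an edge `nₐ → n_b`
for every `a < b`, labelled `{(Q,1)}` if `b = a + 1` (`nₐ` is then the image of `x₁`) and `∅`
otherwise. The edges `nₐ → nₐ₊₁` form a path of `k - 1` edges with equal `p_{2,3,4,6}`, while
the indices increase along any path, so no path has `k` edges.

For (a): `α₁ ≺ α₂` for every position set, so every restriction system puts `(M,1)` into the
label of `α₂`, and then `α₂ ≺ α₁`. Hence `part(Σ) = {Σ}`, and `Σ` is not safe: `α₁` has a
special edge from the affected position `(M,1)` of `x₂` to the position `(M,1)` of the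
existential `x₃`. Both constraints fire in some chase sequence for `I_k`, so the relevant part
of `Σ` is `Σ` itself.
-/

theorem getElem?_pair_eq_some {α : Type*} (x y v : α) (i : ℕ) :
    ([x, y] : List α)[i]? = some v ↔ (i = 0 ∧ x = v) ∨ (i = 1 ∧ y = v) := by
  match i with
  | 0 => simp
  | 1 => simp
  | n + 2 => simp

theorem injOn_update_Iio_succ {α : Type*} {m : ℕ → α} {j : ℕ} {n : α}
    (hinj : Set.InjOn m (Set.Iio j)) (hn : ∀ t < j, m t ≠ n) :
    Set.InjOn (Function.update m j n) (Set.Iio (j + 1)) := by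
  rw [Set.Iio_add_one_eq_Iic, ← Set.Iio_insert, Set.injOn_insert Set.self_notMem_Iio]
  refine ⟨fun a ha b hb hab => hinj ha hb ?_, ?_⟩
  · simpa [Function.update_of_ne (Set.mem_Iio.1 ha).ne,
      Function.update_of_ne (Set.mem_Iio.1 hb).ne] using hab
  · rintro ⟨t, ht, h⟩
    simp only [Function.update_self, Function.update_of_ne (Set.mem_Iio.1 ht).ne] at h
    exact hn t ht h

theorem affCl_mono (t : TGD) {P Q : Set Pos} (h : P ⊆ Q) : affCl t P ⊆ affCl t Q := by
  rintro π ⟨hπ, hP | hex⟩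
  · exact ⟨hπ, Or.inl fun x hx hocc π' hπ' => h (hP x hx hocc π' hπ')⟩
  · exact ⟨hπ, Or.inr hex⟩

theorem prec_mono {P Q : Set Pos} (h : P ⊆ Q) {α β : Constraint} (hαβ : prec P α β) :
    prec Q α β := by
  obtain ⟨I, J, a, b, hI, hnulls, rest⟩ := hαβ
  exact ⟨I, J, a, b, hI, fun F hF π hπ => h (hnulls F hF π hπ), rest⟩

def RestrSys.inf (S : Set Constraint) : RestrSys where
  E α β := ∀ R : RestrSys, R.valid S → R.E α β
  f α := {π | ∀ R : RestrSys, R.valid S → π ∈ R.f α}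

theorem RestrSys.inf_le {S : Set Constraint} {R : RestrSys} (hR : R.valid S) :
    (RestrSys.inf S).le R :=
  ⟨fun _ _ h => h R hR, fun _ _ h => h R hR⟩

theorem RestrSys.valid_inf (S : Set Constraint) : (RestrSys.inf S).valid S := by
  refine ⟨?_, ?_, ?_⟩
  · intro t β ht hβ hE π ⟨hπ, hπβ⟩ R hR
    exact hR.1 t β ht hβ (hE R hR) ⟨affCl_mono t ((inf_le hR).2 _) hπ, hπβ⟩
  · intro e β he hβ hE π ⟨hπ, hπβ⟩ R hR
    exact hR.2.1 e β he hβ (hE R hR) ⟨hπ R hR, hπβ⟩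
  · intro α β hα hβ hprec R hR
    exact hR.2.2 α β hα hβ (prec_mono ((inf_le hR).2 α) hprec)

theorem isMinimalRS_inf (S : Set Constraint) : IsMinimalRS S (RestrSys.inf S) :=
  ⟨RestrSys.valid_inf S, fun _ hR => RestrSys.inf_le hR⟩

theorem SCCs_eq_singleton {S : Set Constraint} {E : Constraint → Constraint → Prop}
    (hconn : ∀ α ∈ S, ∀ β ∈ S, Relation.ReflTransGen (edgeOn S E) α β)
    (hcycle : ∃ α ∈ S, Relation.TransGen (edgeOn S E) α α) : SCCs S E = {S} := by
  have hscc : ∀ α ∈ S, sccOf S E α = S := fun α hα =>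
    Set.ext fun β => ⟨fun h => h.1, fun hβ => ⟨hβ, hconn α hα β hβ, hconn β hβ α hα⟩⟩
  obtain ⟨α, hα, hαα⟩ := hcycle
  ext C
  constructor
  · rintro ⟨β, hβ, -, rfl⟩
    exact hscc β hβ
  · rintro rfl
    exact ⟨α, hα, hαα, (hscc α hα).symm⟩

theorem not_inductivelyRestricted_of_not_isSafe {S : Set Constraint}
    (hSCC : SCCs S (RestrSys.inf S).E = {S}) (hS : ¬ IsSafe S) :
    ¬ InductivelyRestricted S :=
  fun h => hS (h S (.base S _ (isMinimalRS_inf S) hSCC))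

theorem not_isSafe_of_propSpecialEdge {S : Set Constraint} {π : Pos}
    (h : propSpecialEdge S π π) : ¬ IsSafe S :=
  fun hS => hS ⟨π, π, h, .refl⟩

def Reachable (S : Set Constraint) (I J : Set Fact) : Prop :=
  ∃ (D : ChaseData) (r : ℕ), D.inst 0 = I ∧ D.okUpTo S r ∧ D.inst r = J

theorem Reachable.refl (S : Set Constraint) (I : Set Fact) : Reachable S I I :=
  ⟨⟨fun _ => I, fun _ => .tgd ⟨[], []⟩, fun _ _ => .const 0⟩, 0, rfl,
    fun _ h => absurd h (Nat.not_lt_zero _), rfl⟩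

theorem Reachable.tail {S : Set Constraint} {I J K : Set Fact} {α : Constraint}
    {ν : ℕ → Val} (h : Reachable S I J) (hα : α ∈ S) (hstep : α.chaseStep ν J K) :
    Reachable S I K := by
  obtain ⟨D, r, h0, hok, hr⟩ := h
  refine ⟨⟨Function.update D.inst (r + 1) K, Function.update D.cns r α,
    Function.update D.asg r ν⟩, r + 1, by simpa using h0, fun i hi => ?_, by simp⟩
  rcases Nat.lt_succ_iff_lt_or_eq.1 hi with hi | rfl
  · simpa [hi.ne, (Nat.succ_lt_succ hi).ne, (hi.trans (Nat.lt_succ_self r)).ne] using hok i hi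
  · simpa [hr] using ⟨hα, hstep⟩

theorem not_irrelevant_of_chaseStep {S : Set Constraint} {I J : Set Fact} {α : Constraint}
    {ν : ℕ → Val} (hα : α ∈ S) (hstep : α.chaseStep ν I J) : ¬ Irrelevant I S α :=
  fun h => h ⟨⟨fun i => if i = 0 then I else J, fun _ => α, fun _ => ν⟩, 1, rfl,
    fun i hi => by simpa [Nat.lt_one_iff.1 hi] using ⟨hα, hstep⟩, 0, Nat.zero_lt_one, rfl⟩

theorem adom_union (I J : Set Fact) : adom (I ∪ J) = adom I ∪ adom J := by
  ext v
  simp only [adom, Set.mem_union, Set.mem_ofPred_eq]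
  constructor
  · rintro ⟨F, hF | hF, hv⟩
    exacts [Or.inl ⟨F, hF, hv⟩, Or.inr ⟨F, hF, hv⟩]
  · rintro (⟨F, hF, hv⟩ | ⟨F, hF, hv⟩)
    exacts [⟨F, Or.inl hF, hv⟩, ⟨F, Or.inr hF, hv⟩]

@[simp] theorem adom_insert (F : Fact) (I : Set Fact) :
    adom (insert F I) = {v | v ∈ F.args} ∪ adom I := by
  ext v; simp [adom]

@[simp] theorem adom_singleton (F : Fact) : adom {F} = {v | v ∈ F.args} := by
  ext v; simp [adom]

theorem newNulls_union (I J : Set Fact) :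
    newNulls I (I ∪ J) = {v | v.isNull ∧ v ∈ adom J ∧ v ∉ adom I} := by
  ext v
  simp only [newNulls, adom_union, Set.mem_union, Set.mem_ofPred_eq]
  tauto

theorem posOfVal_union_of_notMem_adom {I : Set Fact} {v : Val} (hv : v ∉ adom I)
    (J : Set Fact) : posOfVal (I ∪ J) v = posOfVal J v := by
  ext π
  simp only [posOfVal, Set.mem_union, Set.mem_ofPred_eq]
  constructor
  · rintro ⟨F, hF | hF, hrel, hget⟩
    · exact absurd ⟨F, hF, List.mem_of_getElem? hget⟩ hv
    · exact ⟨F, hF, hrel, hget⟩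
  · rintro ⟨F, hF, hrel, hget⟩
    exact ⟨F, Or.inr hF, hrel, hget⟩

theorem ChaseData.mgNew_eq_empty {D : ChaseData} {i : ℕ}
    (h : newNulls (D.inst i) (D.inst (i + 1)) = ∅) : D.mgNew i = ∅ := by
  simp [ChaseData.mgNew, h]

theorem ChaseData.mgV_succ_of_mgNew_eq_empty {D : ChaseData} {i : ℕ} (h : D.mgNew i = ∅) :
    D.mgV (i + 1) = D.mgV i := by
  simp [ChaseData.mgV, h]

theorem ChaseData.mgE_succ_of_mgNew_eq_empty {D : ChaseData} {i : ℕ} (h : D.mgNew i = ∅) :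
    D.mgE (i + 1) = D.mgE i := by
  simp [ChaseData.mgE, h]

theorem IsPath.rank_src_add_length_le {E : Set MEdge} (rank : MNode → ℕ) {n : ℕ}
    (hE : ∀ e ∈ E, rank e.src < rank e.tgt ∧ rank e.tgt ≤ n) :
    ∀ (e : MEdge) (l : List MEdge), IsPath E (e :: l) → rank e.src + (e :: l).length ≤ n
  | e, [], ⟨hmem, _⟩ => by
    have := hE e (hmem e (List.mem_singleton_self e))
    simp only [List.length_singleton]
    omega
  | e, e' :: l, ⟨hmem, hchain⟩ => by
    have he := hE e (hmem e List.mem_cons_self)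
    rw [(List.isChain_cons_cons.1 hchain).1] at he
    have ih := IsPath.rank_src_add_length_le rank hE e' l
      ⟨fun x hx => hmem x (List.mem_cons_of_mem e hx), (List.isChain_cons_cons.1 hchain).2⟩
    simp only [List.length_cons] at ih ⊢
    omega

theorem IsPath.length_le {E : Set MEdge} (rank : MNode → ℕ) {n : ℕ}
    (hE : ∀ e ∈ E, rank e.src < rank e.tgt ∧ rank e.tgt ≤ n) {l : List MEdge}
    (hl : IsPath E l) : l.length ≤ n := by
  cases l with
  | nil => exact Nat.zero_le n
  | cons e l =>
    have := IsPath.rank_src_add_length_le rank hE e l hl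
    omega

theorem not_kCyclic_of_rank {E : Set MEdge} (rank : MNode → ℕ) {n k : ℕ} (hnk : n < k)
    (hE : ∀ e ∈ E, rank e.src < rank e.tgt ∧ rank e.tgt ≤ n) : ¬ kCyclic E k := by
  rintro ⟨l, es, hl, hsub, hlen, -, -⟩
  have := hsub.length_le
  have := hl.length_le rank hE
  omega

theorem kCyclic_of_seq {E : Set MEdge} (e : ℕ → MEdge) (n : ℕ) (he : ∀ i < n, e i ∈ E)
    (hinj : Set.InjOn e (Set.Iio n)) (hlink : ∀ i, (e i).tgt = (e (i + 1)).src)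
    (hsig : ∀ i, (e i).sig = (e (i + 1)).sig) : kCyclic E n := by
  have chain : ∀ R : MEdge → MEdge → Prop, (∀ i, R (e i) (e (i + 1))) →
      List.IsChain R ((List.range n).map e) := fun R hR => by
    rw [List.isChain_map, List.isChain_range]
    exact fun i _ => hR i
  refine ⟨(List.range n).map e, (List.range n).map e,
    ⟨fun x hx => ?_, chain _ hlink⟩, List.Sublist.refl _, by simp, ?_, chain _ hsig⟩
  · obtain ⟨i, hi, rfl⟩ := List.mem_map.1 hx
    exact he i (List.mem_range.1 hi)
  · exact List.nodup_range.map_on fun a ha b hb h =>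
      hinj (Set.mem_Iio.2 (List.mem_range.1 ha)) (Set.mem_Iio.2 (List.mem_range.1 hb)) h

namespace PayAsYouGo

def relQ : RelSym := (0, 2)
def relM : RelSym := (1, 2)

def g : Val := .const 0
def c (i : ℕ) : Val := .const (i + 1)

def factQ (x y : Val) : Fact := ⟨relQ, [x, y]⟩
def factM (x y : Val) : Fact := ⟨relM, [x, y]⟩

/-- `Q(x₀,x₁) ∧ M(x₀,x₂) → ∃ x₃, Q(x₂,x₃) ∧ M(x₃,x₃)` -/
def tgd₁ : TGD :=
  ⟨[⟨relQ, [.var 0, .var 1]⟩, ⟨relM, [.var 0, .var 2]⟩],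
   [⟨relQ, [.var 2, .var 3]⟩, ⟨relM, [.var 3, .var 3]⟩]⟩

/-- `M(x₀,x₁) → M(g,x₁)` -/
def tgd₂ : TGD := ⟨[⟨relM, [.var 0, .var 1]⟩], [⟨relM, [.const 0, .var 1]⟩]⟩

def α₁ : Constraint := .tgd tgd₁
def α₂ : Constraint := .tgd tgd₂

def Sig : Set Constraint := {α₁, α₂}

@[simp] theorem c_inj {i j : ℕ} : c i = c j ↔ i = j := by simp [c]
@[simp] theorem g_ne_c (i : ℕ) : g ≠ c i := by simp [g, c]
@[simp] theorem not_isNull_c (i : ℕ) : ¬ (c i).isNull := id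
@[simp] theorem not_isNull_g : ¬ g.isNull := id

@[simp] theorem null_ne_c (t i : ℕ) : Val.null t ≠ c i := by simp [c]
@[simp] theorem null_ne_g (t : ℕ) : Val.null t ≠ g := by simp [g]

theorem ne_c_of_isNull {v : Val} (hv : v.isNull) (i : ℕ) : v ≠ c i := by
  rintro rfl; exact hv

@[simp] theorem factQ_inj {x y a b : Val} : factQ x y = factQ a b ↔ x = a ∧ y = b := by
  simp [factQ]
@[simp] theorem factM_inj {x y a b : Val} : factM x y = factM a b ↔ x = a ∧ y = b := by
  simp [factM]
@[simp] theorem factQ_ne_factM (x y a b : Val) : factQ x y ≠ factM a b := by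
  simp [factQ, factM, relQ, relM]
@[simp] theorem factM_ne_factQ (x y a b : Val) : factM x y ≠ factQ a b :=
  (factQ_ne_factM a b x y).symm

theorem mem_adom_factM_right {I : Set Fact} {x y : Val} (h : factM x y ∈ I) : y ∈ adom I :=
  ⟨_, h, by simp [factM]⟩

@[simp] theorem varsOf_tgd₁_body : varsOf tgd₁.body = {0, 1, 2} := by
  ext x; simp [varsOf, tgd₁, Atom.vars]; omega
@[simp] theorem varsOf_tgd₁_head : varsOf tgd₁.head = {2, 3} := by
  ext x; simp [varsOf, tgd₁, Atom.vars]
@[simp] theorem varsOf_tgd₂_body : varsOf tgd₂.body = {0, 1} := by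
  ext x; simp [varsOf, tgd₂, Atom.vars]
@[simp] theorem varsOf_tgd₂_head : varsOf tgd₂.head = {1} := by
  ext x; simp [varsOf, tgd₂, Atom.vars]
@[simp] theorem exVars_tgd₁ : tgd₁.exVars = {3} := by
  ext x; simp [TGD.exVars]; omega
@[simp] theorem exVars_tgd₂ : tgd₂.exVars = ∅ := by
  ext x; simp [TGD.exVars]; omega

theorem bodyHolds_tgd₁_body (I : Set Fact) (ν : ℕ → Val) :
    bodyHolds I tgd₁.body ν ↔ factQ (ν 0) (ν 1) ∈ I ∧ factM (ν 0) (ν 2) ∈ I := by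
  simp [bodyHolds, tgd₁, Atom.inst, Term.eval, factQ, factM]
theorem bodyHolds_tgd₁_head (I : Set Fact) (ν : ℕ → Val) :
    bodyHolds I tgd₁.head ν ↔ factQ (ν 2) (ν 3) ∈ I ∧ factM (ν 3) (ν 3) ∈ I := by
  simp [bodyHolds, tgd₁, Atom.inst, Term.eval, factQ, factM]
theorem bodyHolds_tgd₂_body (I : Set Fact) (ν : ℕ → Val) :
    bodyHolds I tgd₂.body ν ↔ factM (ν 0) (ν 1) ∈ I := by
  simp [bodyHolds, tgd₂, Atom.inst, Term.eval, factM]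
theorem bodyHolds_tgd₂_head (I : Set Fact) (ν : ℕ → Val) :
    bodyHolds I tgd₂.head ν ↔ factM g (ν 1) ∈ I := by
  simp [bodyHolds, tgd₂, Atom.inst, Term.eval, factM, g]

theorem head_tgd₁ (ν : ℕ → Val) :
    {F | ∃ A ∈ tgd₁.head, F = A.inst ν} = {factQ (ν 2) (ν 3), factM (ν 3) (ν 3)} := by
  ext F; simp [tgd₁, Atom.inst, Term.eval, factQ, factM]
theorem head_tgd₂ (ν : ℕ → Val) : {F | ∃ A ∈ tgd₂.head, F = A.inst ν} = {factM g (ν 1)} := by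
  ext F; simp [tgd₂, Atom.inst, Term.eval, factM, g]

theorem α₁_satAt_iff (I : Set Fact) (ν : ℕ → Val) :
    α₁.satAt I ν ↔ (factQ (ν 0) (ν 1) ∈ I → factM (ν 0) (ν 2) ∈ I →
      ∃ w, factQ (ν 2) w ∈ I ∧ factM w w ∈ I) := by
  simp only [α₁, Constraint.satAt, bodyHolds_tgd₁_body, bodyHolds_tgd₁_head, varsOf_tgd₁_body]
  constructor
  · intro h hQ hM
    obtain ⟨ν', hν', hhead⟩ := h ⟨hQ, hM⟩
    exact ⟨ν' 3, by simpa [hν' 2 (by simp)] using hhead⟩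
  · rintro h ⟨hQ, hM⟩
    obtain ⟨w, hw⟩ := h hQ hM
    refine ⟨Function.update ν 3 w, fun v hv => ?_, by simpa using hw⟩
    simp only [Set.mem_insert_iff, Set.mem_singleton_iff] at hv
    rcases hv with rfl | rfl | rfl <;> rfl

theorem α₂_satAt_iff (I : Set Fact) (ν : ℕ → Val) :
    α₂.satAt I ν ↔ (factM (ν 0) (ν 1) ∈ I → factM g (ν 1) ∈ I) := by
  simp only [α₂, Constraint.satAt, bodyHolds_tgd₂_body, bodyHolds_tgd₂_head, varsOf_tgd₂_body]
  constructor
  · intro h hM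
    obtain ⟨ν', hν', hhead⟩ := h hM
    simpa [hν' 1 (by simp)] using hhead
  · exact fun h hM => ⟨ν, fun _ _ => rfl, h hM⟩

theorem α₁_chaseStep_iff (ν : ℕ → Val) (I J : Set Fact) :
    α₁.chaseStep ν I J ↔ ¬ α₁.satAt I ν ∧
      ∃ n : Val, n.isNull ∧ n ∉ adom I ∧ J = I ∪ {factQ (ν 2) n, factM n n} := by
  simp only [α₁, Constraint.chaseStep, exVars_tgd₁, varsOf_tgd₁_body, head_tgd₁]
  refine and_congr_right fun _ => ⟨?_, ?_⟩
  · rintro ⟨ν', hν', hex, -, rfl⟩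
    exact ⟨ν' 3, (hex 3 rfl).1, (hex 3 rfl).2, by rw [hν' 2 (by simp)]⟩
  · rintro ⟨n, hn, hnI, rfl⟩
    refine ⟨Function.update ν 3 n, fun v hv => ?_, by simpa using ⟨hn, hnI⟩,
      by simp, by simp⟩
    simp only [Set.mem_insert_iff, Set.mem_singleton_iff] at hv
    rcases hv with rfl | rfl | rfl <;> rfl

theorem α₂_chaseStep_iff (ν : ℕ → Val) (I J : Set Fact) :
    α₂.chaseStep ν I J ↔ ¬ α₂.satAt I ν ∧ J = I ∪ {factM g (ν 1)} := by
  simp only [α₂, Constraint.chaseStep, exVars_tgd₂, varsOf_tgd₂_body, head_tgd₂]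
  refine and_congr_right fun _ => ⟨?_, ?_⟩
  · rintro ⟨ν', hν', -, -, rfl⟩
    rw [hν' 1 (by simp)]
  · rintro rfl
    exact ⟨ν, fun _ _ => rfl, by simp, by simp, rfl⟩

/-- The second argument of the `Q`-fact whose first argument is `c j`. -/
def qArg (m : ℕ → Val) : ℕ → Val
  | 0 => c 0
  | j + 1 => m j

def I₀ (k : ℕ) : Set Fact :=
  insert (factQ (c 0) (c 0)) ((fun i => factM (c i) (c (i + 1))) '' Set.Iio k)

theorem I₀_finite (k : ℕ) : (I₀ k).Finite :=
  ((Set.finite_Iio k).image _).insert _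

/-- The facts of `I₀ k` together with those added by `j` applications of `α₁` creating the
nulls `m 0, …, m (j-1)`. -/
def stage (k j : ℕ) (m : ℕ → Val) : Set Fact :=
  (fun i => factQ (c i) (qArg m i)) '' Set.Iic j ∪
    (fun i => factM (c i) (c (i + 1))) '' Set.Iio k ∪ (fun i => factM (m i) (m i)) '' Set.Iio j

theorem stage_zero (k : ℕ) (m : ℕ → Val) : stage k 0 m = I₀ k := by
  ext F
  simp [stage, I₀, qArg, eq_comm]

theorem factQ_mem_stage {k j : ℕ} {m : ℕ → Val} {x y : Val} :
    factQ x y ∈ stage k j m ↔ ∃ i ≤ j, c i = x ∧ qArg m i = y := by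
  simp [stage]

theorem factM_mem_stage {k j : ℕ} {m : ℕ → Val} {x y : Val} :
    factM x y ∈ stage k j m ↔
      (∃ i < k, c i = x ∧ c (i + 1) = y) ∨ ∃ i < j, m i = x ∧ m i = y := by
  simp [stage]

theorem stage_update_succ (k j : ℕ) (m : ℕ → Val) (n : Val) :
    stage k (j + 1) (Function.update m j n) = stage k j m ∪ {factQ (c (j + 1)) n, factM n n} := by
  have hlt : ∀ i < j, Function.update m j n i = m i := fun i hi => Function.update_of_ne hi.ne _ _
  have hle : ∀ i ≤ j, qArg (Function.update m j n) i = qArg m i := by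
    rintro (_ | i) hi
    exacts [rfl, hlt i hi]
  ext F
  simp only [stage, Set.mem_union, Set.mem_image, Set.mem_Iic, Set.mem_Iio, Set.mem_insert_iff,
    Set.mem_singleton_iff, Nat.le_succ_iff_eq_or_le, Nat.lt_succ_iff_lt_or_eq]
  constructor
  · rintro ((⟨i, rfl | hi, rfl⟩ | h) | ⟨i, hi | rfl, rfl⟩)
    · simp [qArg]
    · exact Or.inl (Or.inl (Or.inl ⟨i, hi, by rw [hle i hi]⟩))
    · exact Or.inl (Or.inl (Or.inr h))
    · exact Or.inl (Or.inr ⟨i, hi, by rw [hlt i hi]⟩)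
    · simp
  · rintro (((⟨i, hi, rfl⟩ | h) | ⟨i, hi, rfl⟩) | rfl | rfl)
    · exact Or.inl (Or.inl ⟨i, Or.inr hi, by rw [hle i hi]⟩)
    · exact Or.inl (Or.inr h)
    · exact Or.inr ⟨i, Or.inl hi, by rw [hlt i hi]⟩
    · exact Or.inl (Or.inl ⟨j + 1, Or.inl rfl, by simp [qArg]⟩)
    · exact Or.inr ⟨j, Or.inr rfl, by simp⟩

theorem exists_eq_of_isNull_mem_adom_stage {k j : ℕ} {m : ℕ → Val} {v : Val}
    (hv : v ∈ adom (stage k j m)) (hnull : v.isNull) : ∃ i < j, m i = v := by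
  obtain ⟨F, hF, hvF⟩ := hv
  simp only [stage, Set.mem_union, Set.mem_image, Set.mem_Iic, Set.mem_Iio] at hF
  rcases hF with (⟨i, hi, rfl⟩ | ⟨i, hi, rfl⟩) | ⟨i, hi, rfl⟩
  · rcases i with _ | i
    · simp [factQ, qArg, ne_c_of_isNull hnull] at hvF
    · simp only [factQ, qArg, List.mem_cons, List.not_mem_nil, or_false] at hvF
      rcases hvF with rfl | rfl
      exacts [absurd hnull (not_isNull_c _), ⟨i, hi, rfl⟩]
  · simp [factM, ne_c_of_isNull hnull] at hvF
  · simp only [factM, List.mem_cons, List.not_mem_nil, or_false, or_self] at hvF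
    exact ⟨i, hi, hvF.symm⟩

theorem m_mem_adom_stage {k j i : ℕ} {m : ℕ → Val} (hi : i < j) : m i ∈ adom (stage k j m) :=
  mem_adom_factM_right (factM_mem_stage.2 (Or.inr ⟨i, hi, rfl, rfl⟩))

/-- The instances of a chase sequence for `I₀ k`: a stage, together with the facts `M(g,v)`,
`v ∈ V`, added by `α₂`. -/
def state (k j : ℕ) (m : ℕ → Val) (V : Set Val) : Set Fact := stage k j m ∪ factM g '' V

theorem factQ_mem_state {k j : ℕ} {m : ℕ → Val} {V : Set Val} {x y : Val} :
    factQ x y ∈ state k j m V ↔ ∃ i ≤ j, c i = x ∧ qArg m i = y := by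
  simp [state, factQ_mem_stage]

theorem factM_mem_state {k j : ℕ} {m : ℕ → Val} {V : Set Val} {x y : Val} :
    factM x y ∈ state k j m V ↔
      (∃ i < k, c i = x ∧ c (i + 1) = y) ∨ (∃ i < j, m i = x ∧ m i = y) ∨ (g = x ∧ y ∈ V) := by
  simp [state, factM_mem_stage, or_assoc, and_comm]

theorem α₁_not_satAt_state_iff {k j : ℕ} {m : ℕ → Val} {V : Set Val} {ν : ℕ → Val}
    (hm : ∀ i < j, (m i).isNull) :
    ¬ α₁.satAt (state k j m V) ν ↔ j < k ∧ ν 0 = c j ∧ ν 1 = qArg m j ∧ ν 2 = c (j + 1) := by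
  rw [α₁_satAt_iff]
  constructor
  · intro h
    push Not at h
    obtain ⟨hQ, hM, hhead⟩ := h
    obtain ⟨i, hij, h0, h1⟩ := factQ_mem_state.1 hQ
    rcases factM_mem_state.1 hM with ⟨i', hi'k, h0', h2⟩ | ⟨i', hi'j, h0', -⟩ | ⟨h0', -⟩
    · obtain rfl : i' = i := c_inj.1 (h0'.trans h0.symm)
      obtain rfl | hij := hij.eq_or_lt
      · exact ⟨hi'k, h0.symm, h1.symm, h2.symm⟩
      · refine absurd (hhead (m i') ?_) (not_not.2 ?_)
        · exact factQ_mem_state.2 ⟨i' + 1, hij, h2, rfl⟩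
        · exact factM_mem_state.2 (Or.inr (Or.inl ⟨i', hij, rfl, rfl⟩))
    · exact absurd (h0'.trans h0.symm) (ne_c_of_isNull (hm i' hi'j) i)
    · exact absurd (h0'.trans h0.symm) (g_ne_c i)
  · rintro ⟨hjk, h0, h1, h2⟩ h
    obtain ⟨w, hw, -⟩ := h (factQ_mem_state.2 ⟨j, le_rfl, h0.symm, h1.symm⟩)
      (factM_mem_state.2 (Or.inl ⟨j, hjk, h0.symm, h2.symm⟩))
    obtain ⟨i, hij, hi, -⟩ := factQ_mem_state.1 hw
    rw [h2, c_inj] at hi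
    omega

theorem state_union_singleton (k j : ℕ) (m : ℕ → Val) (V : Set Val) (v : Val) :
    state k j m V ∪ {factM g v} = state k j m (insert v V) := by
  rw [state, state, Set.image_insert_eq, Set.union_assoc, Set.union_comm _ {_},
    Set.singleton_union]

theorem state_update_succ (k j : ℕ) (m : ℕ → Val) (V : Set Val) (n : Val) :
    state k (j + 1) (Function.update m j n) V =
      state k j m V ∪ {factQ (c (j + 1)) n, factM n n} := by
  rw [state, state, stage_update_succ, Set.union_right_comm]

/-- The positions at which a null created by `α₁` first occurs. -/
def newNullPos : Set Pos := {(relQ, 1), (relM, 0), (relM, 1)}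

def nodes (j : ℕ) (m : ℕ → Val) : Set MNode := (fun t => (m t, newNullPos)) '' Set.Iio j

/-- The monitor-graph edge into the node of `m b` from the node of an older null `m a`: the
step creating `m b` has `x₁ ↦ m (b - 1)`, so `m a` occurs in its body (at `(Q,1)`) iff
`a + 1 = b`. -/
def edge (m : ℕ → Val) (a b : ℕ) : MEdge :=
  ⟨(m a, newNullPos), α₁, if a + 1 = b then {(relQ, 1)} else ∅, (m b, newNullPos)⟩

def edges (j : ℕ) (m : ℕ → Val) : Set MEdge := {e | ∃ a b, a < b ∧ b < j ∧ e = edge m a b}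

theorem nodes_update_succ (j : ℕ) (m : ℕ → Val) (n : Val) :
    nodes (j + 1) (Function.update m j n) = nodes j m ∪ {(n, newNullPos)} := by
  rw [nodes, nodes, Set.Iio_add_one_eq_Iic, ← Set.Iio_insert, Set.image_insert_eq,
    Set.insert_eq, Set.union_comm]
  congr 1
  · exact Set.image_congr fun i hi => by rw [Function.update_of_ne (Set.mem_Iio.1 hi).ne]
  · simp

theorem edges_update_succ (j : ℕ) (m : ℕ → Val) (n : Val) :
    edges (j + 1) (Function.update m j n) =
      edges j m ∪ {e | ∃ a < j, e = edge (Function.update m j n) a j} := by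
  ext e
  simp only [edges, Set.mem_union, Set.mem_ofPred_eq]
  constructor
  · rintro ⟨a, b, hab, hb, rfl⟩
    rcases Nat.lt_succ_iff_lt_or_eq.1 hb with hb | rfl
    · left
      refine ⟨a, b, hab, hb, ?_⟩
      simp [edge, Function.update_of_ne hb.ne, Function.update_of_ne (hab.trans hb).ne]
    · exact Or.inr ⟨a, hab, rfl⟩
  · rintro (⟨a, b, hab, hb, rfl⟩ | ⟨a, ha, rfl⟩)
    · refine ⟨a, b, hab, hb.trans (Nat.lt_succ_self j), ?_⟩
      simp [edge, Function.update_of_ne hb.ne, Function.update_of_ne (hab.trans hb).ne]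
    · exact ⟨a, j, ha, Nat.lt_succ_self j, rfl⟩

theorem newNulls_α₁ {I : Set Fact} {x n : Val} (hx : ¬ x.isNull) (hn : n.isNull)
    (hnI : n ∉ adom I) : newNulls I (I ∪ {factQ x n, factM n n}) = {n} := by
  ext v
  simp only [newNulls_union, adom_insert, adom_singleton, factQ, factM, Set.mem_ofPred_eq,
    Set.mem_union, List.mem_cons, List.not_mem_nil, or_false, Set.mem_singleton_iff]
  constructor
  · rintro ⟨hv, (rfl | rfl) | rfl | rfl, -⟩
    exacts [absurd hv hx, rfl, rfl, rfl]
  · rintro rfl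
    exact ⟨hn, Or.inl (Or.inr rfl), hnI⟩

theorem posOfVal_α₁ {I : Set Fact} {x n : Val} (hxn : x ≠ n) (hnI : n ∉ adom I) :
    posOfVal (I ∪ {factQ x n, factM n n}) n = newNullPos := by
  rw [posOfVal_union_of_notMem_adom hnI]
  ext ⟨R, p⟩
  simp only [posOfVal, newNullPos, factQ, factM, Set.mem_insert_iff, Set.mem_singleton_iff,
    Set.mem_ofPred_eq, exists_eq_or_imp, exists_eq_left, getElem?_pair_eq_some, Prod.mk.injEq]
  constructor
  · rintro (⟨rfl, (⟨rfl, h⟩ | ⟨rfl, -⟩)⟩ | ⟨rfl, (⟨rfl, -⟩ | ⟨rfl, -⟩)⟩)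
    exacts [absurd h hxn, Or.inl ⟨rfl, rfl⟩, Or.inr (Or.inl ⟨rfl, rfl⟩),
      Or.inr (Or.inr ⟨rfl, rfl⟩)]
  · rintro (⟨rfl, rfl⟩ | ⟨rfl, rfl⟩ | ⟨rfl, rfl⟩) <;> simp

theorem instBodyPos_α₁ {j a : ℕ} {m : ℕ → Val} {ν : ℕ → Val} (hm : ∀ i < j, (m i).isNull)
    (hinj : Set.InjOn m (Set.Iio j)) (ha : a < j)
    (h0 : ν 0 = c j) (h1 : ν 1 = qArg m j) (h2 : ν 2 = c (j + 1)) :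
    instBodyPos α₁ ν (m a) = if a + 1 = j then {(relQ, 1)} else ∅ := by
  have hq : qArg m j = m a ↔ a + 1 = j := by
    obtain _ | j := j
    · omega
    · constructor
      · intro h
        rw [hinj (Set.mem_Iio.2 (Nat.lt_succ_self j)) ha h]
      · intro h
        obtain rfl : a = j := by omega
        rfl
  have hc : ∀ i, c i ≠ m a := fun i h => ne_c_of_isNull (hm a ha) i h.symm
  ext ⟨R, p⟩
  simp only [instBodyPos, α₁, tgd₁, Constraint.bodyAtoms, List.mem_cons, List.not_mem_nil,
    or_false, exists_eq_or_imp, exists_eq_left, List.map, Term.eval, getElem?_pair_eq_some,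
    h0, h1, h2, hc, hq, Set.mem_ofPred_eq]
  split_ifs with h <;> simp [h, relQ, relM, and_comm, eq_comm]

theorem newEdges_α₁ {j : ℕ} {m : ℕ → Val} {ν : ℕ → Val} {n : Val} (hm : ∀ i < j, (m i).isNull)
    (hinj : Set.InjOn m (Set.Iio j)) (h0 : ν 0 = c j) (h1 : ν 1 = qArg m j)
    (h2 : ν 2 = c (j + 1)) :
    {e : MEdge | e.src ∈ nodes j m ∧ e.tgt ∈ ({(n, newNullPos)} : Set MNode) ∧ e.cns = α₁ ∧
      e.lbl = instBodyPos α₁ ν e.src.1} = {e | ∃ a < j, e = edge (Function.update m j n) a j} := by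
  ext ⟨s, α, L, t⟩
  simp only [nodes, edge, Set.mem_image, Set.mem_Iio, Set.mem_singleton_iff, Set.mem_ofPred_eq,
    MEdge.mk.injEq]
  constructor
  · rintro ⟨⟨a, ha, rfl⟩, rfl, rfl, rfl⟩
    refine ⟨a, ha, by simp [Function.update_of_ne ha.ne], rfl, ?_, by simp⟩
    rw [instBodyPos_α₁ hm hinj ha h0 h1 h2]
  · rintro ⟨a, ha, rfl, rfl, rfl, rfl⟩
    refine ⟨⟨a, ha, by simp [Function.update_of_ne ha.ne]⟩, by simp, rfl, ?_⟩
    simp only [Function.update_of_ne ha.ne]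
    rw [instBodyPos_α₁ hm hinj ha h0 h1 h2]

def TracksState (k : ℕ) (D : ChaseData) (i : ℕ) : Prop :=
  ∃ (j : ℕ) (m : ℕ → Val) (V : Set Val), j ≤ k ∧ (∀ t < j, (m t).isNull) ∧
    Set.InjOn m (Set.Iio j) ∧ D.inst i = state k j m V ∧ D.mgV i = nodes j m ∧
    D.mgE i = edges j m

theorem tracksState_zero {k : ℕ} {D : ChaseData} (hD : D.inst 0 = I₀ k) : TracksState k D 0 :=
  ⟨0, Val.null, ∅, Nat.zero_le k, by simp, by simp,
    by rw [hD, state, stage_zero, Set.image_empty, Set.union_empty],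
    by simp [nodes, ChaseData.mgV], by simp [edges, ChaseData.mgE]⟩

theorem tracksState_succ_of_α₁ {k i j : ℕ} {m : ℕ → Val} {V : Set Val} {D : ChaseData}
    (hm : ∀ t < j, (m t).isNull) (hinj : Set.InjOn m (Set.Iio j))
    (hI : D.inst i = state k j m V) (hV : D.mgV i = nodes j m) (hE : D.mgE i = edges j m)
    (hα : D.cns i = α₁) (hstep : α₁.chaseStep (D.asg i) (D.inst i) (D.inst (i + 1))) :
    TracksState k D (i + 1) := by
  rw [hI, α₁_chaseStep_iff] at hstep
  obtain ⟨hviol, n, hn, hnI, hJ⟩ := hstep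
  obtain ⟨hjk, h0, h1, h2⟩ := (α₁_not_satAt_state_iff hm).1 hviol
  rw [h2] at hJ
  have hmn : ∀ t < j, m t ≠ n := fun t ht h =>
    hnI (h ▸ by rw [state, adom_union]; exact Or.inl (m_mem_adom_stage ht))
  have hnew : D.mgNew i = {(n, newNullPos)} := by
    ext p
    simp only [ChaseData.mgNew, hI, hJ, newNulls_α₁ (not_isNull_c _) hn hnI,
      posOfVal_α₁ (ne_c_of_isNull hn _).symm hnI, Set.mem_singleton_iff, exists_eq_left,
      Set.mem_ofPred_eq]
  refine ⟨j + 1, Function.update m j n, V, hjk, fun t ht => ?_, injOn_update_Iio_succ hinj hmn,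
    by rw [hJ, state_update_succ],
    by rw [ChaseData.mgV, hV, hnew, nodes_update_succ], ?_⟩
  · rcases Nat.lt_succ_iff_lt_or_eq.1 ht with ht | rfl
    · simpa [Function.update_of_ne ht.ne] using hm t ht
    · simpa using hn
  · rw [ChaseData.mgE, hE, hV, hnew, hα, edges_update_succ, newEdges_α₁ hm hinj h0 h1 h2]

theorem tracksState_succ_of_α₂ {k i j : ℕ} {m : ℕ → Val} {V : Set Val} {D : ChaseData}
    (hjk : j ≤ k) (hm : ∀ t < j, (m t).isNull) (hinj : Set.InjOn m (Set.Iio j))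
    (hI : D.inst i = state k j m V) (hV : D.mgV i = nodes j m) (hE : D.mgE i = edges j m)
    (hstep : α₂.chaseStep (D.asg i) (D.inst i) (D.inst (i + 1))) :
    TracksState k D (i + 1) := by
  rw [α₂_chaseStep_iff, α₂_satAt_iff] at hstep
  obtain ⟨hviol, hJ⟩ := hstep
  have hbody : D.asg i 1 ∈ adom (D.inst i) := mem_adom_factM_right (Classical.not_imp.1 hviol).1
  have hnew : D.mgNew i = ∅ := by
    refine ChaseData.mgNew_eq_empty ?_
    ext v
    simp only [hJ, newNulls_union, adom_singleton, factM, List.mem_cons, List.not_mem_nil,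
      or_false, Set.mem_ofPred_eq, Set.mem_empty_iff_false, iff_false, not_and]
    rintro hv (rfl | rfl)
    exacts [absurd hv not_isNull_g, not_not.2 hbody]
  refine ⟨j, m, insert (D.asg i 1) V, hjk, hm, hinj,
    by rw [hJ, hI, state_union_singleton], ?_, ?_⟩
  · rw [ChaseData.mgV_succ_of_mgNew_eq_empty hnew, hV]
  · rw [ChaseData.mgE_succ_of_mgNew_eq_empty hnew, hE]

theorem tracksState_of_okUpTo {k r : ℕ} {D : ChaseData} (hD : D.inst 0 = I₀ k)
    (hok : D.okUpTo Sig r) : ∀ i ≤ r, TracksState k D i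
  | 0, _ => tracksState_zero hD
  | i + 1, hi => by
    obtain ⟨j, m, V, hjk, hm, hinj, hI, hV, hE⟩ := tracksState_of_okUpTo hD hok i (by omega)
    obtain ⟨hα, hstep⟩ := hok i (by omega)
    rcases hα with hα | hα
    · exact tracksState_succ_of_α₁ hm hinj hI hV hE hα (hα ▸ hstep)
    · exact tracksState_succ_of_α₂ hjk hm hinj hI hV hE (hα ▸ hstep)

theorem eq_of_α₁_holds_state {k j : ℕ} {m : ℕ → Val} {V : Set Val} (hm : ∀ t < j, (m t).isNull)
    (hjk : j ≤ k) (h : α₁.holds (state k j m V)) : j = k := by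
  by_contra hne
  exact (α₁_not_satAt_state_iff (ν := fun v => [c j, qArg m j, c (j + 1)].getD v g) hm).2
    ⟨lt_of_le_of_ne hjk hne, rfl, rfl, rfl⟩ (h _)

theorem kCyclic_edges {k : ℕ} {m : ℕ → Val} (hinj : Set.InjOn m (Set.Iio k)) :
    kCyclic (edges k m) (k - 1) := by
  refine kCyclic_of_seq (fun i => edge m i (i + 1)) (k - 1)
    (fun i hi => ⟨i, i + 1, Nat.lt_succ_self i, by omega, rfl⟩) ?_ (fun _ => rfl)
    (fun _ => by simp [edge, MEdge.sig])
  intro a ha b hb h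
  have h' : m (a + 1) = m (b + 1) := congrArg (fun e : MEdge => e.tgt.1) h
  have := hinj (Set.mem_Iio.2 (by simp at ha; omega)) (Set.mem_Iio.2 (by simp at hb; omega)) h'
  omega

theorem not_kCyclic_edges {k : ℕ} {m : ℕ → Val} (hk : 1 ≤ k) (hinj : Set.InjOn m (Set.Iio k)) :
    ¬ kCyclic (edges k m) k := by
  refine not_kCyclic_of_rank (fun p => Function.invFunOn m (Set.Iio k) p.1) (n := k - 1)
    (by omega) ?_
  rintro _ ⟨a, b, hab, hb, rfl⟩
  simp only [edge, hinj.leftInvOn_invFunOn (Set.mem_Iio.2 (hab.trans hb)),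
    hinj.leftInvOn_invFunOn (Set.mem_Iio.2 hb)]
  omega

theorem cyclic_of_terminates {k r : ℕ} (hk : 1 ≤ k) {D : ChaseData} (hD : D.inst 0 = I₀ k)
    (hok : D.okUpTo Sig r) (hsat : ∀ α ∈ Sig, α.holds (D.inst r)) :
    kCyclic (D.mgE r) (k - 1) ∧ ¬ kCyclic (D.mgE r) k := by
  obtain ⟨j, m, V, hjk, hm, hinj, hI, -, hE⟩ := tracksState_of_okUpTo hD hok r le_rfl
  obtain rfl : j = k := eq_of_α₁_holds_state hm hjk (hI ▸ hsat α₁ (Or.inl rfl))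
  rw [hE]
  exact ⟨kCyclic_edges hinj, not_kCyclic_edges hk hinj⟩

theorem state_zero (k : ℕ) (m : ℕ → Val) : state k 0 m ∅ = I₀ k := by
  rw [state, stage_zero, Set.image_empty, Set.union_empty]

theorem α₁_chaseStep_state {k j : ℕ} (hj : j < k) :
    α₁.chaseStep (fun v => [c j, qArg Val.null j, c (j + 1)].getD v g)
      (state k j Val.null ∅) (state k (j + 1) Val.null ∅) := by
  rw [α₁_chaseStep_iff]
  refine ⟨(α₁_not_satAt_state_iff (m := Val.null) fun _ _ => trivial).2 ⟨hj, rfl, rfl, rfl⟩,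
    Val.null j, trivial, fun h => ?_, by simpa using state_update_succ k j Val.null ∅ (Val.null j)⟩
  rw [state, Set.image_empty, Set.union_empty] at h
  obtain ⟨i, hi, hij⟩ := exists_eq_of_isNull_mem_adom_stage h trivial
  exact hi.ne (Val.null.inj hij)

theorem α₂_chaseStep_of_mem {I : Set Fact} {x v : Val} (hx : factM x v ∈ I)
    (hv : factM g v ∉ I) : α₂.chaseStep (fun u => [x, v].getD u g) I (I ∪ {factM g v}) := by
  rw [α₂_chaseStep_iff, α₂_satAt_iff]
  exact ⟨fun h => hv (h hx), rfl⟩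

theorem reachable_state (k : ℕ) : ∀ j ≤ k, Reachable Sig (I₀ k) (state k j Val.null ∅)
  | 0, _ => state_zero k Val.null ▸ Reachable.refl Sig (I₀ k)
  | j + 1, hj => (reachable_state k j (by omega)).tail (Or.inl rfl) (α₁_chaseStep_state hj)

theorem reachable_union_α₂ {I₀ I : Set Fact} (h : Reachable Sig I₀ I) (s : Finset Val)
    (hbody : ∀ v ∈ s, ∃ x, factM x v ∈ I) (hhead : ∀ v ∈ s, factM g v ∉ I) :
    Reachable Sig I₀ (I ∪ factM g '' s) := by
  classical
  induction s using Finset.induction_on with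
  | empty => simpa using h
  | insert a s has ih =>
    obtain ⟨x, hx⟩ := hbody a (Finset.mem_insert_self a s)
    have step := α₂_chaseStep_of_mem (I := I ∪ factM g '' s) (Or.inl hx) ?_
    · rw [Finset.coe_insert, Set.image_insert_eq, Set.union_insert, ← Set.union_singleton]
      exact (ih (fun v hv => hbody v (Finset.mem_insert_of_mem hv))
        (fun v hv => hhead v (Finset.mem_insert_of_mem hv))).tail (Or.inr rfl) step
    · rintro (h | ⟨v, hv, hva⟩)
      · exact hhead a (Finset.mem_insert_self a s) h
      · exact has ((factM_inj.1 hva).2 ▸ hv)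

/-- The second arguments of the `M`-facts of `state k k Val.null ∅`. -/
def secondArgs (k : ℕ) : Finset Val :=
  (Finset.range k).image (fun i => c (i + 1)) ∪ (Finset.range k).image Val.null

theorem holds_state_secondArgs (k : ℕ) :
    ∀ α ∈ Sig, α.holds (state k k Val.null (secondArgs k)) := by
  rintro α (rfl | rfl) ν
  · by_contra h
    exact lt_irrefl k ((α₁_not_satAt_state_iff (m := Val.null) fun _ _ => trivial).1 h).1
  · rw [α₂_satAt_iff]
    intro h
    refine factM_mem_state.2 (Or.inr (Or.inr ⟨rfl, ?_⟩))
    rcases factM_mem_state.1 h with ⟨i, hi, -, h1⟩ | ⟨i, hi, -, h1⟩ | ⟨-, h1⟩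
    · exact Finset.mem_union_left _ (Finset.mem_image.2 ⟨i, Finset.mem_range.2 hi, h1⟩)
    · exact Finset.mem_union_right _ (Finset.mem_image.2 ⟨i, Finset.mem_range.2 hi, h1⟩)
    · exact h1

theorem exists_terminating_chase (k : ℕ) :
    ∃ (D : ChaseData) (r : ℕ), D.inst 0 = I₀ k ∧ D.okUpTo Sig r ∧
      ∀ α ∈ Sig, α.holds (D.inst r) := by
  have hreach := reachable_union_α₂ (reachable_state k k le_rfl) (secondArgs k) ?_ ?_
  · obtain ⟨D, r, h0, hok, hr⟩ := hreach
    refine ⟨D, r, h0, hok, ?_⟩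
    rw [hr, state, Set.image_empty, Set.union_empty]
    exact holds_state_secondArgs k
  · intro v hv
    simp only [secondArgs, Finset.mem_union, Finset.mem_image, Finset.mem_range] at hv
    rcases hv with ⟨i, hi, rfl⟩ | ⟨i, hi, rfl⟩
    · exact ⟨c i, factM_mem_state.2 (Or.inl ⟨i, hi, rfl, rfl⟩)⟩
    · exact ⟨Val.null i, factM_mem_state.2 (Or.inr (Or.inl ⟨i, hi, rfl, rfl⟩))⟩
  · intro v _ h
    rcases factM_mem_state.1 h with ⟨i, -, hi, -⟩ | ⟨i, -, hi, -⟩ | ⟨-, hv⟩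
    · exact g_ne_c i hi.symm
    · exact null_ne_g i hi
    · exact hv

theorem not_irrelevant {k : ℕ} (hk : 1 ≤ k) {α : Constraint} (hα : α ∈ Sig) :
    ¬ Irrelevant (I₀ k) Sig α := by
  rcases hα with rfl | rfl
  · exact not_irrelevant_of_chaseStep (Or.inl rfl) (state_zero k Val.null ▸ α₁_chaseStep_state hk)
  · rw [← state_zero k Val.null]
    refine not_irrelevant_of_chaseStep (Or.inr rfl) (α₂_chaseStep_of_mem
      (factM_mem_state.2 (Or.inl ⟨0, hk, rfl, rfl⟩)) fun h => ?_)
    rcases factM_mem_state.1 h with ⟨i, -, hi, -⟩ | ⟨i, hi, -⟩ | ⟨-, hv⟩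
    · exact g_ne_c i hi.symm
    · exact absurd hi (Nat.not_lt_zero i)
    · exact hv

theorem nullAt_factQ {x y : Val} {π : Pos} (h : (factQ x y).nullAt π) :
    (π = (relQ, 0) ∧ x.isNull) ∨ (π = (relQ, 1) ∧ y.isNull) := by
  obtain ⟨hrel, v, hget, hv⟩ := h
  obtain ⟨R, p⟩ := π
  obtain rfl : relQ = R := hrel
  rcases (getElem?_pair_eq_some _ _ _ _).1 hget with ⟨rfl, rfl⟩ | ⟨rfl, rfl⟩
  exacts [Or.inl ⟨rfl, hv⟩, Or.inr ⟨rfl, hv⟩]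

theorem nullAt_factM {x y : Val} {π : Pos} (h : (factM x y).nullAt π) :
    (π = (relM, 0) ∧ x.isNull) ∨ (π = (relM, 1) ∧ y.isNull) := by
  obtain ⟨hrel, v, hget, hv⟩ := h
  obtain ⟨R, p⟩ := π
  obtain rfl : relM = R := hrel
  rcases (getElem?_pair_eq_some _ _ _ _).1 hget with ⟨rfl, rfl⟩ | ⟨rfl, rfl⟩
  exacts [Or.inl ⟨rfl, hv⟩, Or.inr ⟨rfl, hv⟩]

theorem two_mem_headUniVars_α₁ : 2 ∈ α₁.headUniVars := by
  simp [Constraint.headUniVars, α₁]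

theorem one_mem_headUniVars_α₂ : 1 ∈ α₂.headUniVars := by
  simp [Constraint.headUniVars, α₂]

theorem prec_α₁_α₂ (P : Set Pos) : prec P α₁ α₂ := by
  have hstep := α₁_chaseStep_state (k := 1) Nat.zero_lt_one
  refine ⟨state 1 0 Val.null ∅, state 1 1 Val.null ∅, _, fun _ => Val.null 0,
    state_zero 1 Val.null ▸ I₀_finite 1, ?_, hstep.1, ?_, hstep, ?_,
    1, one_mem_headUniVars_α₂, trivial⟩
  · intro F hF π hπ
    rw [state_zero, I₀, Set.mem_insert_iff, Set.mem_image] at hF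
    rcases hF with rfl | ⟨i, -, rfl⟩
    · rcases nullAt_factQ hπ with ⟨-, h⟩ | ⟨-, h⟩ <;> exact absurd h (not_isNull_c 0)
    · rcases nullAt_factM hπ with ⟨-, h⟩ | ⟨-, h⟩ <;> exact absurd h (not_isNull_c _)
  · rw [α₂_satAt_iff]
    intro h
    rcases factM_mem_state.1 h with ⟨i, -, h0, -⟩ | ⟨i, hi, -⟩ | ⟨h0, -⟩
    · exact absurd h0.symm (null_ne_c 0 i)
    · exact absurd hi (Nat.not_lt_zero i)
    · exact absurd h0.symm (null_ne_g 0)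
  · rw [α₂_satAt_iff]
    intro h
    have hM := h (factM_mem_state.2 (Or.inr (Or.inl ⟨0, Nat.zero_lt_one, rfl, rfl⟩)))
    rcases factM_mem_state.1 hM with ⟨i, -, h0, -⟩ | ⟨i, -, h0, -⟩ | ⟨-, hv⟩
    · exact g_ne_c i h0.symm
    · exact null_ne_g i h0
    · exact hv

theorem prec_α₂_α₁ {P : Set Pos} (hP : (relM, 1) ∈ P) : prec P α₂ α₁ := by
  have hstep := α₂_chaseStep_of_mem (I := {factQ g g, factM (c 0) (Val.null 0)})
    (Or.inr rfl) (by simp)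
  refine ⟨_, _, _, fun v => [g, g, Val.null 0].getD v g, Set.toFinite _, ?_, hstep.1, ?_, hstep,
    ?_, 2, two_mem_headUniVars_α₁, trivial⟩
  · rintro F (rfl | rfl) π hπ
    · rcases nullAt_factQ hπ with ⟨-, h⟩ | ⟨-, h⟩ <;> exact absurd h not_isNull_g
    · rcases nullAt_factM hπ with ⟨-, h⟩ | ⟨rfl, -⟩
      exacts [absurd h (not_isNull_c 0), hP]
  · rw [α₁_satAt_iff]
    intro _ h
    simp at h
  · rw [α₁_satAt_iff]
    intro h
    obtain ⟨w, hw, -⟩ := h (by simp) (by simp)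
    simp at hw

theorem occursAt_tgd₁_head : occursAt tgd₁.head 3 (relM, 1) :=
  ⟨⟨relM, [.var 3, .var 3]⟩, by simp [tgd₁], rfl, rfl⟩

theorem eq_of_occursAt_tgd₁_body {π : Pos} (h : occursAt tgd₁.body 2 π) : π = (relM, 1) := by
  obtain ⟨A, hA, hrel, hget⟩ := h
  simp only [tgd₁, List.mem_cons, List.not_mem_nil, or_false] at hA
  obtain ⟨R, p⟩ := π
  rcases hA with rfl | rfl <;> obtain rfl : _ = R := hrel <;>
    rcases (getElem?_pair_eq_some _ _ _ _).1 hget with ⟨rfl, h⟩ | ⟨rfl, h⟩ <;> simp_all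

theorem mem_affCl_tgd₁ (P : Set Pos) : (relM, 1) ∈ affCl tgd₁ P :=
  ⟨⟨⟨relM, [.var 3, .var 3]⟩, by simp [tgd₁], rfl, by simp⟩,
    Or.inr ⟨3, by simp, occursAt_tgd₁_head⟩⟩

theorem mem_pos_α₂ : (relM, 1) ∈ α₂.pos :=
  ⟨⟨relM, [.var 0, .var 1]⟩, by simp [α₂, Constraint.bodyAtoms, tgd₂], rfl, by simp⟩

theorem RestrSys.edges_of_valid {R : RestrSys} (hR : R.valid Sig) : R.E α₁ α₂ ∧ R.E α₂ α₁ := by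
  have h12 := hR.2.2 α₁ α₂ (Or.inl rfl) (Or.inr rfl) (prec_α₁_α₂ _)
  have hM : (relM, 1) ∈ R.f α₂ :=
    hR.1 tgd₁ α₂ (Or.inl rfl) (Or.inr rfl) h12 ⟨mem_affCl_tgd₁ _, mem_pos_α₂⟩
  exact ⟨h12, hR.2.2 α₂ α₁ (Or.inr rfl) (Or.inl rfl) (prec_α₂_α₁ hM)⟩

theorem SCCs_Sig : SCCs Sig (RestrSys.inf Sig).E = {Sig} := by
  obtain ⟨h12, h21⟩ := RestrSys.edges_of_valid (RestrSys.valid_inf Sig)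
  have e12 : edgeOn Sig (RestrSys.inf Sig).E α₁ α₂ := ⟨Or.inl rfl, Or.inr rfl, h12⟩
  have e21 : edgeOn Sig (RestrSys.inf Sig).E α₂ α₁ := ⟨Or.inr rfl, Or.inl rfl, h21⟩
  refine SCCs_eq_singleton ?_ ⟨α₁, Or.inl rfl, .tail (.single e12) e21⟩
  rintro α (rfl | rfl) β (rfl | rfl)
  exacts [.refl, .single e12, .single e21, .refl]

theorem propSpecialEdge_Sig : propSpecialEdge Sig (relM, 1) (relM, 1) :=
  ⟨tgd₁, Or.inl rfl, 2, by simp [TGD.uniVars], by simp,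
    ⟨⟨relM, [.var 0, .var 2]⟩, by simp [tgd₁], rfl, rfl⟩,
    fun _ hπ => eq_of_occursAt_tgd₁_body hπ ▸ .ex tgd₁ 3 _ (Or.inl rfl) (by simp)
      occursAt_tgd₁_head,
    3, by simp, occursAt_tgd₁_head⟩

theorem not_inductivelyRestricted_Sig : ¬ InductivelyRestricted Sig :=
  not_inductivelyRestricted_of_not_isSafe SCCs_Sig
    (not_isSafe_of_propSpecialEdge propSpecialEdge_Sig)

theorem relevant_eq_Sig {k : ℕ} (hk : 1 ≤ k) :
    {α | α ∈ Sig ∧ ¬ Irrelevant (I₀ k) Sig α} = Sig :=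
  Set.sep_eq_self_iff_mem_true.2 fun _ hα => not_irrelevant hk hα

end PayAsYouGo

/-- Proposition 2. For each `k ≥ 1` there are a constraint set
`Σ_k` and an instance `I_k` such that (a) both `Σ_k` and the subset of constraints
of `Σ_k` that are not `(I_k,Σ_k)`-irrelevant are not inductively restricted, and
(b) every chase sequence for `I_k` with `Σ_k` is `(k-1)`-cyclic but not `k`-cyclic
(and at least one complete chase sequence exists). -/
theorem pay_as_you_go (k : ℕ) (hk : 1 ≤ k) :
    ∃ (Sk : Set Constraint) (Ik : Set Fact), Sk.Finite ∧ Ik.Finite ∧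
      ¬ InductivelyRestricted Sk ∧
      ¬ InductivelyRestricted {α | α ∈ Sk ∧ ¬ Irrelevant Ik Sk α} ∧
      (∃ (D : ChaseData) (r : ℕ), D.inst 0 = Ik ∧ D.okUpTo Sk r ∧
        ∀ α ∈ Sk, α.holds (D.inst r)) ∧
      (∀ (D : ChaseData) (r : ℕ), D.inst 0 = Ik → D.okUpTo Sk r →
        (∀ α ∈ Sk, α.holds (D.inst r)) →
        kCyclic (D.mgE r) (k-1) ∧ ¬ kCyclic (D.mgE r) k) := by
  open PayAsYouGo in
  exact ⟨Sig, I₀ k, (Set.finite_singleton α₂).insert α₁, I₀_finite k,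
    not_inductivelyRestricted_Sig, by rw [relevant_eq_Sig hk]; exact not_inductivelyRestricted_Sig,
    exists_terminating_chase k, fun D r hD hok hsat => cyclic_of_terminates hk hD hok hsat⟩

end StopChase
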